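/- arXiv:0708.0062 — 3 statements merged into one kernel-verified Lean document; each statement's English description precedes it below -/
import Mathlib

section
/- A bandlimited function is determined by its samples: if f, g ∈ L²(ℝ) are both Ω-bandlimited and f(nπ/Ω) = g(nπ/Ω) for all n ∈ ℤ, then f = g (as continuous functions). -/
open MeasureTheory

/-- `f` is `Ω`-bandlimited: it is the (inverse) Fourier representation of an
`L²` function `g` whose support lies in `[-Ω, Ω]`; `f` is thereby the
continuous representative (Paley–Wiener). -/
def Bandlimited (Ω : ℝ) (f : ℝ → ℂ) : Prop :=
  ∃ g : ℝ → ℂ, MemLp g 2 (volume : Measure ℝ) ∧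
    (∀ ξ : ℝ, ξ ∉ Set.Icc (-Ω) Ω → g ξ = 0) ∧
    ∀ t : ℝ, f t = (1 / (2 * Real.pi) : ℂ) *
      ∫ ξ : ℝ, g ξ * Complex.exp (Complex.I * ξ * t)

/-- An `L²` function supported in a compact interval is integrable. -/
lemma integrable_of_memL2_supp {Ω : ℝ} {u : ℝ → ℂ}
    (hu : MemLp u 2 (volume : Measure ℝ))
    (hsupp : ∀ ξ : ℝ, ξ ∉ Set.Icc (-Ω) Ω → u ξ = 0) :
    Integrable u (volume : Measure ℝ) := by
  haveI : Fact ((volume : Measure ℝ) (Set.Icc (-Ω) Ω) < ⊤) :=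
    ⟨measure_Icc_lt_top⟩
  have h1 : IntegrableOn u (Set.Icc (-Ω) Ω) (volume : Measure ℝ) :=
    (hu.restrict (Set.Icc (-Ω) Ω)).integrable (by norm_num)
  have h2 : Integrable ((Set.Icc (-Ω) Ω).indicator u) (volume : Measure ℝ) :=
    (integrable_indicator_iff measurableSet_Icc).2 h1
  have : (Set.Icc (-Ω) Ω).indicator u = u := by
    funext ξ
    by_cases hξ : ξ ∈ Set.Icc (-Ω) Ω
    · simp [Set.indicator_of_mem hξ]
    · simp [Set.indicator_of_notMem hξ, hsupp ξ hξ]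
  rwa [this] at h2

lemma integrable_mul_exp {u : ℝ → ℂ} (hu : Integrable u (volume : Measure ℝ)) (t : ℝ) :
    Integrable (fun ξ : ℝ => u ξ * Complex.exp (Complex.I * ξ * t)) (volume : Measure ℝ) := by
  have hc : Continuous (fun ξ : ℝ => Complex.exp (Complex.I * ξ * t)) := by
    fun_prop
  have := hu.bdd_mul hc.aestronglyMeasurable (c := 1) (Filter.Eventually.of_forall fun ξ => by
    rw [Complex.norm_exp]
    have : (Complex.I * ξ * t).re = 0 := by simp
    simp [this])
  simpa [mul_comm] using this

set_option maxHeartbeats 1000000 in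
/-- A bandlimited function is determined by its samples at the Nyquist spacing:
if two `Ω`-bandlimited `L²` functions agree at all points `nπ/Ω`, `n ∈ ℤ`, then
they agree everywhere (as continuous functions). -/
theorem bandlimited_eq_of_samples_eq (Ω : ℝ) (hΩ : 0 < Ω) (f g : ℝ → ℂ)
    (hf : Bandlimited Ω f) (hg : Bandlimited Ω g)
    (h : ∀ n : ℤ, f (n * Real.pi / Ω) = g (n * Real.pi / Ω)) :
    f = g := by
  obtain ⟨u, hu2, husupp, huf⟩ := hf
  obtain ⟨v, hv2, hvsupp, hvf⟩ := hg
  have hΩ0 : Ω ≠ 0 := ne_of_gt hΩ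
  set T : ℝ := 2 * Ω with hTdef
  haveI : Fact (0 < T) := ⟨by positivity⟩
  set d : ℝ → ℂ := fun ξ => u ξ - v ξ with hd
  have hd2 : MemLp d 2 (volume : Measure ℝ) := hu2.sub hv2
  have hdsupp : ∀ ξ : ℝ, ξ ∉ Set.Icc (-Ω) Ω → d ξ = 0 := fun ξ hξ => by
    simp [hd, husupp ξ hξ, hvsupp ξ hξ]
  have huint := integrable_of_memL2_supp hu2 husupp
  have hvint := integrable_of_memL2_supp hv2 hvsupp
  have hdint := integrable_of_memL2_supp hd2 hdsupp
  have hc : (1 / (2 * Real.pi) : ℂ) ≠ 0 := by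
    apply one_div_ne_zero
    apply mul_ne_zero two_ne_zero
    exact_mod_cast Complex.ofReal_ne_zero.2 Real.pi_ne_zero
  have hne : ∀ᵐ x : ℝ ∂volume, x ≠ -Ω := by
    rw [ae_iff]
    have : {x : ℝ | ¬x ≠ -Ω} = {-Ω} := by ext x; simp
    rw [this]
    exact measure_singleton _
  -- the samples condition gives vanishing of certain integrals of `d`
  have hzero : ∀ m : ℤ,
      ∫ ξ : ℝ, d ξ * Complex.exp (Complex.I * ξ * (((m : ℝ) * Real.pi / Ω : ℝ) : ℂ)) = 0 := by
    intro m
    have hm := h m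
    rw [huf (m * Real.pi / Ω), hvf (m * Real.pi / Ω)] at hm
    have hAB := mul_left_cancel₀ hc hm
    have hsub := integral_sub (integrable_mul_exp huint ((m : ℝ) * Real.pi / Ω))
      (integrable_mul_exp hvint ((m : ℝ) * Real.pi / Ω))
    have heq : (fun ξ : ℝ =>
          d ξ * Complex.exp (Complex.I * ξ * (((m : ℝ) * Real.pi / Ω : ℝ) : ℂ)))
        = fun ξ : ℝ =>
          u ξ * Complex.exp (Complex.I * ξ * (((m : ℝ) * Real.pi / Ω : ℝ) : ℂ))
          - v ξ * Complex.exp (Complex.I * ξ * (((m : ℝ) * Real.pi / Ω : ℝ) : ℂ)) := by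
      funext ξ; simp [hd, sub_mul]
    rw [heq, hsub, hAB, sub_self]
  -- a strongly measurable representative of `d`
  set d' : ℝ → ℂ := hd2.1.mk d with hd'def
  have hd'sm : StronglyMeasurable d' := hd2.1.stronglyMeasurable_mk
  have hdd' : d =ᵐ[volume] d' := hd2.1.ae_eq_mk
  -- the lift to the circle of circumference `T = 2Ω`
  set H : AddCircle T → ℂ := AddCircle.liftIoc T (-Ω) d' with hHdef
  have hHsm : StronglyMeasurable H := by
    have : H = (Set.Ioc (-Ω) (-Ω + T)).restrict d' ∘ AddCircle.equivIoc T (-Ω) := rfl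
    rw [this]
    exact (hd'sm.comp_measurable measurable_subtype_coe).comp_measurable
      (AddCircle.measurableEquivIoc T (-Ω)).measurable
  have hIocIcc : Set.Ioc (-Ω) (-Ω + T) ⊆ Set.Icc (-Ω) Ω := by
    intro x hx
    simp only [hTdef] at hx
    constructor <;> [exact le_of_lt hx.1; linarith [hx.2]]
  -- Fourier coefficients of `H` all vanish
  have hFC : ∀ n : ℤ, fourierCoeff H n = 0 := by
    intro n
    rw [fourierCoeff_eq_intervalIntegral H n (-Ω)]
    have hle : (-Ω : ℝ) ≤ -Ω + T := by simp only [hTdef]; linarith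
    rw [intervalIntegral.integral_of_le hle]
    have e1 : ∫ x in Set.Ioc (-Ω) (-Ω + T), fourier (-n) (x : AddCircle T) • H ↑x
        = ∫ x in Set.Ioc (-Ω) (-Ω + T), fourier (-n) (x : AddCircle T) • d x := by
      apply integral_congr_ae
      filter_upwards [ae_restrict_mem measurableSet_Ioc, ae_restrict_of_ae hdd'] with x hx hdx
      rw [hHdef, AddCircle.liftIoc_coe_apply hx, hdx]
    have e2 : ∫ x in Set.Ioc (-Ω) (-Ω + T), fourier (-n) (x : AddCircle T) • d x
        = ∫ x : ℝ, fourier (-n) (x : AddCircle T) • d x := by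
      apply setIntegral_eq_integral_of_ae_compl_eq_zero
      filter_upwards [hne] with x hxne hx
      have hx' : x ∉ Set.Icc (-Ω) Ω := by
        intro hmem
        exact hx ⟨lt_of_le_of_ne hmem.1 (Ne.symm hxne), by simp only [hTdef]; linarith [hmem.2]⟩
      simp [hdsupp x hx']
    rw [e1, e2]
    have hΩC : (Ω : ℂ) ≠ 0 := Complex.ofReal_ne_zero.2 hΩ0
    have e3 : ∫ x : ℝ, fourier (-n) (x : AddCircle T) • d x
        = ∫ ξ : ℝ, d ξ * Complex.exp
            (Complex.I * ξ * ((((-n : ℤ) : ℝ) * Real.pi / Ω : ℝ) : ℂ)) := by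
      apply integral_congr_ae
      apply Filter.Eventually.of_forall
      intro x
      show fourier (-n) (x : AddCircle T) • d x = _
      rw [fourier_coe_apply, smul_eq_mul, mul_comm]
      congr 2
      push_cast [hTdef]
      field_simp
    rw [e3, hzero (-n), smul_zero]
  -- `H` is in `L²` of the circle
  have hHL2 : MemLp H 2 (AddCircle.haarAddCircle : Measure (AddCircle T)) := by
    have hmk := AddCircle.measurePreserving_mk T (-Ω)
    have h1 : MemLp (H ∘ ((↑) : ℝ → AddCircle T)) 2
        (volume.restrict (Set.Ioc (-Ω) (-Ω + T))) := by
      have hde : d' =ᵐ[volume.restrict (Set.Ioc (-Ω) (-Ω + T))]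
          H ∘ ((↑) : ℝ → AddCircle T) := by
        filter_upwards [ae_restrict_mem measurableSet_Ioc] with x hx
        exact (AddCircle.liftIoc_coe_apply hx).symm
      exact ((hd2.ae_eq hdd').restrict _).ae_eq hde
    have h2 : MemLp H 2 (volume : Measure (AddCircle T)) := by
      rw [← hmk.map_eq]
      exact (memLp_map_measure_iff
        (by rw [hmk.map_eq]; exact hHsm.aestronglyMeasurable)
        AddCircle.measurable_mk'.aemeasurable).2 h1
    have hhaar : (AddCircle.haarAddCircle : Measure (AddCircle T))
        = (ENNReal.ofReal T)⁻¹ • (volume : Measure (AddCircle T)) := by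
      rw [AddCircle.volume_eq_smul_haarAddCircle, smul_smul,
        ENNReal.inv_mul_cancel (ENNReal.ofReal_pos.2 (Fact.out : (0:ℝ) < T)).ne'
          ENNReal.ofReal_ne_top,
        one_smul]
    rw [hhaar]
    exact h2.smul_measure (by simpa using (Fact.out : (0:ℝ) < T))
  -- hence `H = 0` a.e. w.r.t. the Haar measure
  have hH0 : H =ᵐ[(AddCircle.haarAddCircle : Measure (AddCircle T))] 0 := by
    set F : Lp ℂ 2 (AddCircle.haarAddCircle : Measure (AddCircle T)) := hHL2.toLp H with hF
    have hFH : ⇑F =ᵐ[AddCircle.haarAddCircle] H := hHL2.coeFn_toLp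
    have hrepr : fourierBasis.repr F = 0 := by
      ext n
      rw [fourierBasis_repr]
      have : fourierCoeff (⇑F) n = fourierCoeff H n := by
        unfold fourierCoeff
        exact integral_congr_ae (hFH.mono fun x hx => by simp [hx])
      simp [this, hFC n]
    have hF0 : F = 0 := by
      apply fourierBasis.repr.injective
      rw [hrepr, map_zero]
    calc H =ᵐ[AddCircle.haarAddCircle] ⇑F := hFH.symm
      _ =ᵐ[AddCircle.haarAddCircle] 0 := by rw [hF0]; exact Lp.coeFn_zero _ _ _
  -- transfer back to `ℝ` : `d = 0` a.e.
  have hd0 : d =ᵐ[volume] 0 := by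
    have hmk := AddCircle.measurePreserving_mk T (-Ω)
    have h1 : H =ᵐ[(volume : Measure (AddCircle T))] 0 := by
      have hle : ae (volume : Measure (AddCircle T))
          ≤ ae (AddCircle.haarAddCircle : Measure (AddCircle T)) := by
        rw [AddCircle.volume_eq_smul_haarAddCircle]
        exact Measure.ae_smul_measure_le _
      exact hH0.filter_mono hle
    have h2 : ∀ᵐ x : ℝ ∂((volume : Measure ℝ).restrict (Set.Ioc (-Ω) (-Ω + T))),
        H ↑x = 0 := by
      rw [← hmk.map_eq] at h1
      exact ae_of_ae_map AddCircle.measurable_mk'.aemeasurable h1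
    have h3 : ∀ᵐ x : ℝ ∂((volume : Measure ℝ).restrict (Set.Ioc (-Ω) (-Ω + T))),
        d x = 0 := by
      filter_upwards [h2, ae_restrict_mem measurableSet_Ioc, ae_restrict_of_ae hdd']
        with x hx hmem hdx
      exact hdx.trans ((AddCircle.liftIoc_coe_apply (f := d') hmem).symm.trans hx)
    rw [ae_restrict_iff' measurableSet_Ioc] at h3
    filter_upwards [h3, hne] with x hx hxne
    by_cases hmem : x ∈ Set.Icc (-Ω) Ω
    · apply hx
      constructor
      · exact lt_of_le_of_ne hmem.1 (Ne.symm hxne)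
      · simp only [hTdef]; linarith [hmem.2]
    · simp [hdsupp x hmem]
  -- conclude pointwise equality
  funext t
  rw [huf t, hvf t]
  congr 1
  have hsub := integral_sub (integrable_mul_exp huint t) (integrable_mul_exp hvint t)
  have hdz : ∫ ξ : ℝ, d ξ * Complex.exp (Complex.I * ξ * t) = 0 := by
    have hz : (fun ξ : ℝ => d ξ * Complex.exp (Complex.I * ξ * t)) =ᵐ[volume]
        (fun _ => (0 : ℂ)) := by
      filter_upwards [hd0] with ξ hξ
      simp [hξ]
    rw [integral_congr_ae hz, integral_zero]
  have heq : (fun ξ : ℝ => d ξ * Complex.exp (Complex.I * ξ * t))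
      = fun ξ : ℝ => u ξ * Complex.exp (Complex.I * ξ * t)
        - v ξ * Complex.exp (Complex.I * ξ * t) := by
    funext ξ; simp [hd, sub_mul]
  rw [heq, hsub] at hdz
  exact sub_eq_zero.mp hdz
end

section
/- Weyl asymptotics for the flat torus: for the Laplacian on the d-dimensional torus ℝ^d/(2πL ℤ)^d, the number N(Ω) of eigenvalues (counted with multiplicity) that are ≤ Ω² satisfies N(Ω)/Ω^d → V(B_d)·(2πL)^d/(2π)^d as Ω → ∞, where V(B_d) is the volume of the unit ball in ℝ^d. -/
open Filter MeasureTheory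

open Metric
open scoped ENNReal

namespace WeylAux

variable {d : ℕ}

noncomputable def emb (d : ℕ) (k : Fin d → ℤ) : EuclideanSpace ℝ (Fin d) :=
  (WithLp.equiv 2 _).symm (fun i => (k i : ℝ))

@[simp] lemma emb_apply (k : Fin d → ℤ) (i : Fin d) : emb d k i = (k i : ℝ) := rfl

def cube (d : ℕ) (k : Fin d → ℤ) : Set (EuclideanSpace ℝ (Fin d)) :=
  ((MeasurableEquiv.toLp 2 (Fin d → ℝ)).symm) ⁻¹' (Set.univ.pi fun i => Set.Ico (k i : ℝ) (k i + 1))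

lemma mem_cube {k : Fin d → ℤ} {x : EuclideanSpace ℝ (Fin d)} :
    x ∈ cube d k ↔ ∀ i, (k i : ℝ) ≤ x i ∧ x i < k i + 1 := by
  simp [cube, Set.mem_pi, MeasurableEquiv.coe_toLp_symm]

lemma cube_measurable (k : Fin d → ℤ) : MeasurableSet (cube d k) :=
  (MeasurableSet.univ_pi fun _ => measurableSet_Ico).preimage
    ((MeasurableEquiv.toLp 2 (Fin d → ℝ)).symm).measurable

lemma volume_cube (k : Fin d → ℤ) : volume (cube d k) = 1 := by
  rw [cube, (EuclideanSpace.volume_preserving_symm_measurableEquiv_toLp (Fin d)).measure_preimage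
      ((MeasurableSet.univ_pi fun _ => measurableSet_Ico).nullMeasurableSet)]
  simp [volume_pi_pi, Real.volume_Ico]

lemma cube_disjoint {k k' : Fin d → ℤ} (h : k ≠ k') : Disjoint (cube d k) (cube d k') := by
  rw [Set.disjoint_left]
  intro x hx hx'
  apply h
  funext i
  have h1 := mem_cube.1 hx i
  have h2 := mem_cube.1 hx' i
  have e1 : ⌊x i⌋ = k i := Int.floor_eq_iff.2 ⟨h1.1, by push_cast; exact h1.2⟩
  have e2 : ⌊x i⌋ = k' i := Int.floor_eq_iff.2 ⟨h2.1, by push_cast; exact h2.2⟩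
  rw [← e1, e2]

lemma finite_A (r : ℝ) : {k : Fin d → ℤ | (∑ i, ((k i : ℝ)) ^ 2) ≤ r}.Finite := by
  apply Set.Finite.subset
    (Set.finite_Icc (fun _ : Fin d => -⌈Real.sqrt r⌉) (fun _ : Fin d => ⌈Real.sqrt r⌉))
  intro k hk
  have key : ∀ i, |(k i : ℝ)| ≤ Real.sqrt r := by
    intro i
    apply Real.abs_le_sqrt
    refine le_trans ?_ hk
    exact Finset.single_le_sum (fun j _ => sq_nonneg ((k j : ℝ))) (Finset.mem_univ i)
  constructor
  · intro i
    have : -(⌈Real.sqrt r⌉ : ℝ) ≤ (k i : ℝ) := by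
      have := Int.le_ceil (Real.sqrt r)
      have := (abs_le.1 (key i)).1
      linarith
    exact_mod_cast this
  · intro i
    have : (k i : ℝ) ≤ (⌈Real.sqrt r⌉ : ℝ) := by
      have := Int.le_ceil (Real.sqrt r)
      have := (abs_le.1 (key i)).2
      linarith
    exact_mod_cast this

lemma card_eq (r : ℝ) :
    (Nat.card {k : Fin d → ℤ // (∑ i, ((k i : ℝ)) ^ 2) ≤ r} : ℝ≥0∞) =
      volume (⋃ k ∈ {k : Fin d → ℤ | (∑ i, ((k i : ℝ)) ^ 2) ≤ r}, cube d k) := by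
  have hfin := finite_A (d := d) r
  have h1 : (⋃ k ∈ {k : Fin d → ℤ | (∑ i, ((k i : ℝ)) ^ 2) ≤ r}, cube d k)
      = ⋃ k ∈ hfin.toFinset, cube d k := by
    simp [Set.Finite.mem_toFinset]
  rw [h1, measure_biUnion_finset ?_ (fun k _ => cube_measurable k)]
  · simp only [volume_cube, Finset.sum_const, nsmul_eq_mul, mul_one]
    congr 1
    have : {k : Fin d → ℤ // (∑ i, ((k i : ℝ)) ^ 2) ≤ r} = {k : Fin d → ℤ | (∑ i, ((k i : ℝ)) ^ 2) ≤ r} := rfl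
    rw [this, Nat.card_eq_card_finite_toFinset hfin]
  · intro k hk k' hk' hne
    exact cube_disjoint hne


lemma norm_emb (k : Fin d → ℤ) : ‖emb d k‖ = Real.sqrt (∑ i, (k i : ℝ) ^ 2) := by
  simp [EuclideanSpace.norm_eq, sq_abs]

lemma sum_sq_eq_norm_sq (k : Fin d → ℤ) : (∑ i, (k i : ℝ) ^ 2) = ‖emb d k‖ ^ 2 := by
  rw [norm_emb, Real.sq_sqrt (Finset.sum_nonneg fun i _ => sq_nonneg _)]

lemma norm_sub_le_sqrt {k : Fin d → ℤ} {x : EuclideanSpace ℝ (Fin d)}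
    (h : ∀ i, (x i - (k i : ℝ)) ^ 2 ≤ 1) : ‖x - emb d k‖ ≤ Real.sqrt d := by
  rw [EuclideanSpace.norm_eq]
  apply Real.sqrt_le_sqrt
  calc ∑ i, ‖(x - emb d k) i‖ ^ 2 = ∑ i, (x i - (k i : ℝ)) ^ 2 := by
        simp [sq_abs]
    _ ≤ ∑ _i : Fin d, (1 : ℝ) := Finset.sum_le_sum fun i _ => h i
    _ = d := by simp

lemma union_subset_closedBall (R : ℝ) (hR : 0 ≤ R) :
    (⋃ k ∈ {k : Fin d → ℤ | (∑ i, ((k i : ℝ)) ^ 2) ≤ R ^ 2}, cube d k) ⊆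
      closedBall (0 : EuclideanSpace ℝ (Fin d)) (R + Real.sqrt d) := by
  intro x hx
  simp only [Set.mem_iUnion, Set.mem_setOf_eq, exists_prop] at hx
  obtain ⟨k, hk, hxk⟩ := hx
  rw [mem_closedBall, dist_zero_right]
  have h1 : ‖emb d k‖ ≤ R := by
    rw [norm_emb]
    calc Real.sqrt (∑ i, (k i : ℝ) ^ 2) ≤ Real.sqrt (R ^ 2) := Real.sqrt_le_sqrt hk
      _ = R := Real.sqrt_sq hR
  have h2 : ‖x - emb d k‖ ≤ Real.sqrt d := by
    apply norm_sub_le_sqrt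
    intro i
    have := mem_cube.1 hxk i
    nlinarith [this.1, this.2]
  have := norm_sub_norm_le x (emb d k)
  linarith

lemma ball_subset_union (R : ℝ) :
    ball (0 : EuclideanSpace ℝ (Fin d)) (R - Real.sqrt d) ⊆
      ⋃ k ∈ {k : Fin d → ℤ | (∑ i, ((k i : ℝ)) ^ 2) ≤ R ^ 2}, cube d k := by
  intro x hx
  rw [mem_ball, dist_zero_right] at hx
  set k : Fin d → ℤ := fun i => ⌊x i⌋ with hkdef
  have hcube : x ∈ cube d k := by
    rw [mem_cube]
    intro i
    refine ⟨Int.floor_le _, ?_⟩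
    exact Int.lt_floor_add_one (x i)
  have h2 : ‖x - emb d k‖ ≤ Real.sqrt d := by
    apply norm_sub_le_sqrt
    intro i
    have h1 := Int.floor_le (x i)
    have h2 := Int.lt_floor_add_one (x i)
    have h2' : x i < (k i : ℝ) + 1 := by exact_mod_cast h2
    nlinarith [h1, h2']
  have hnk : ‖emb d k‖ ≤ R := by
    have := norm_sub_norm_le (emb d k) x
    rw [← neg_sub x (emb d k), norm_neg] at this
    have hsd := Real.sqrt_nonneg (d : ℝ)
    linarith [hx.le]
  simp only [Set.mem_iUnion, Set.mem_setOf_eq, exists_prop]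
  refine ⟨k, ?_, hcube⟩
  rw [sum_sq_eq_norm_sq]
  have h0 : (0:ℝ) ≤ ‖emb d k‖ := norm_nonneg _
  nlinarith


lemma bounds (hd : 0 < d) (R : ℝ) (hR : Real.sqrt d ≤ R) :
    (volume (ball (0 : EuclideanSpace ℝ (Fin d)) 1)).toReal * (R - Real.sqrt d) ^ d ≤
      (Nat.card {k : Fin d → ℤ // (∑ i, ((k i : ℝ)) ^ 2) ≤ R ^ 2} : ℝ) ∧
    (Nat.card {k : Fin d → ℤ // (∑ i, ((k i : ℝ)) ^ 2) ≤ R ^ 2} : ℝ) ≤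
      (volume (ball (0 : EuclideanSpace ℝ (Fin d)) 1)).toReal * (R + Real.sqrt d) ^ d := by
  haveI : Nonempty (Fin d) := ⟨⟨0, hd⟩⟩
  haveI : Nontrivial (EuclideanSpace ℝ (Fin d)) := inferInstance
  have hsd : 0 ≤ Real.sqrt d := Real.sqrt_nonneg _
  have hR0 : 0 ≤ R := hsd.trans hR
  have hRs : 0 ≤ R - Real.sqrt d := by linarith
  have hfin : volume (ball (0 : EuclideanSpace ℝ (Fin d)) 1) ≠ ⊤ := measure_ball_lt_top.ne
  have hcard := card_eq (d := d) (R ^ 2)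
  have hup : (Nat.card {k : Fin d → ℤ // (∑ i, ((k i : ℝ)) ^ 2) ≤ R ^ 2} : ℝ≥0∞) ≤
      volume (closedBall (0 : EuclideanSpace ℝ (Fin d)) (R + Real.sqrt d)) := by
    rw [hcard]; exact measure_mono (union_subset_closedBall R hR0)
  have hlo : volume (ball (0 : EuclideanSpace ℝ (Fin d)) (R - Real.sqrt d)) ≤
      (Nat.card {k : Fin d → ℤ // (∑ i, ((k i : ℝ)) ^ 2) ≤ R ^ 2} : ℝ≥0∞) := by
    rw [hcard]; exact measure_mono (ball_subset_union R)
  rw [Measure.addHaar_ball _ _ hRs, finrank_euclideanSpace_fin] at hlo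
  rw [Measure.addHaar_closedBall _ _ (by positivity), finrank_euclideanSpace_fin] at hup
  constructor
  · have := ENNReal.toReal_mono (ENNReal.natCast_ne_top _) hlo
    rwa [ENNReal.toReal_mul, ENNReal.toReal_ofReal (by positivity),
      ENNReal.toReal_natCast, mul_comm] at this
  · have := ENNReal.toReal_mono (ENNReal.mul_ne_top ENNReal.ofReal_ne_top hfin) hup
    rwa [ENNReal.toReal_mul, ENNReal.toReal_ofReal (by positivity),
      ENNReal.toReal_natCast, mul_comm] at this

end WeylAux

open WeylAux in
/-- **Weyl asymptotics for the flat torus.** For the Laplacian on the flat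
`d`-dimensional torus `ℝ^d/(2πL ℤ)^d`, whose eigenvalues are `|k|²/L²` for
`k ∈ ℤ^d`, the number `N(Ω) = #{k ∈ ℤ^d : |k|² ≤ L²Ω²}` of eigenvalues
(with multiplicity) that are `≤ Ω²` satisfies
`N(Ω)/Ω^d → V(B_d)·(2πL)^d/(2π)^d` as `Ω → ∞`, where `V(B_d)` is the volume of
the unit ball in `ℝ^d`. -/
theorem weyl_asymptotics_flat_torus (d : ℕ) (hd : 0 < d) (L : ℝ) (hL : 0 < L) :
    Tendsto (fun Ω : ℝ =>
        (Nat.card {k : Fin d → ℤ // (∑ i, ((k i : ℝ)) ^ 2) ≤ L ^ 2 * Ω ^ 2} : ℝ) / Ω ^ d)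
      atTop
      (nhds ((volume (Metric.ball (0 : EuclideanSpace ℝ (Fin d)) 1)).toReal *
        (2 * Real.pi * L) ^ d / (2 * Real.pi) ^ d)) := by
  have hπ : (0 : ℝ) < 2 * Real.pi := by positivity
  have hsd : 0 ≤ Real.sqrt d := Real.sqrt_nonneg d
  set ω := (volume (Metric.ball (0 : EuclideanSpace ℝ (Fin d)) 1)).toReal with hω
  have htarget : ω * (2 * Real.pi * L) ^ d / (2 * Real.pi) ^ d = ω * L ^ d := by
    rw [mul_pow]
    field_simp
  rw [htarget]
  have hlim0 : Tendsto (fun Ω : ℝ => Real.sqrt d * Ω⁻¹) atTop (nhds 0) := by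
    simpa using tendsto_inv_atTop_zero.const_mul (Real.sqrt d)
  have hup : Tendsto (fun Ω : ℝ => ω * (L + Real.sqrt d * Ω⁻¹) ^ d) atTop (nhds (ω * L ^ d)) := by
    have h1 : Tendsto (fun Ω : ℝ => L + Real.sqrt d * Ω⁻¹) atTop (nhds L) := by
      simpa using tendsto_const_nhds.add hlim0
    simpa using (h1.pow d).const_mul ω
  have hlo : Tendsto (fun Ω : ℝ => ω * (L - Real.sqrt d * Ω⁻¹) ^ d) atTop (nhds (ω * L ^ d)) := by
    have h1 : Tendsto (fun Ω : ℝ => L - Real.sqrt d * Ω⁻¹) atTop (nhds L) := by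
      simpa using tendsto_const_nhds.sub hlim0
    simpa using (h1.pow d).const_mul ω
  apply tendsto_of_tendsto_of_tendsto_of_le_of_le' hlo hup
  · filter_upwards [eventually_ge_atTop (max 1 (Real.sqrt d / L))] with Ω hΩ
    have hΩ1 : (1 : ℝ) ≤ Ω := le_trans (le_max_left _ _) hΩ
    have hΩ0 : (0 : ℝ) < Ω := lt_of_lt_of_le one_pos hΩ1
    have hRs : Real.sqrt d ≤ L * Ω := by
      have h := le_trans (le_max_right _ _) hΩ
      rw [div_le_iff₀ hL] at h
      linarith
    have h1 := (bounds hd (L * Ω) hRs).1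
    rw [show L ^ 2 * Ω ^ 2 = (L * Ω) ^ 2 from (mul_pow L Ω 2).symm]
    have key : ω * (L - Real.sqrt d * Ω⁻¹) ^ d = ω * (L * Ω - Real.sqrt d) ^ d / Ω ^ d := by
      rw [show L - Real.sqrt d * Ω⁻¹ = (L * Ω - Real.sqrt d) / Ω from by field_simp,
        div_pow]
      ring
    rw [key]
    exact (div_le_div_iff_of_pos_right (pow_pos hΩ0 d)).mpr h1
  · filter_upwards [eventually_ge_atTop (max 1 (Real.sqrt d / L))] with Ω hΩ
    have hΩ1 : (1 : ℝ) ≤ Ω := le_trans (le_max_left _ _) hΩ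
    have hΩ0 : (0 : ℝ) < Ω := lt_of_lt_of_le one_pos hΩ1
    have hRs : Real.sqrt d ≤ L * Ω := by
      have h := le_trans (le_max_right _ _) hΩ
      rw [div_le_iff₀ hL] at h
      linarith
    have h2 := (bounds hd (L * Ω) hRs).2
    rw [show L ^ 2 * Ω ^ 2 = (L * Ω) ^ 2 from (mul_pow L Ω 2).symm]
    have key : ω * (L + Real.sqrt d * Ω⁻¹) ^ d = ω * (L * Ω + Real.sqrt d) ^ d / Ω ^ d := by
      rw [show L + Real.sqrt d * Ω⁻¹ = (L * Ω + Real.sqrt d) / Ω from by field_simp,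
        div_pow]
      ring
    rw [key]
    exact (div_le_div_iff_of_pos_right (pow_pos hΩ0 d)).mpr h2
end

section
/- Superoscillation density: for any Ω > 0 and any bounded interval I = (a,b) ⊂ ℝ, the set of restrictions to I of Ω-bandlimited functions in L²(ℝ) is dense in L²(I). -/
open MeasureTheory
open Complex Set Filter

set_option maxHeartbeats 1000000 in
lemma SOH_meas_aux {h : ℝ → ℂ} (hm : StronglyMeasurable h) (z : ℂ) (μ : MeasureTheory.Measure ℝ) :
    MeasureTheory.AEStronglyMeasurable (fun t : ℝ => h t * Complex.exp (-(Complex.I * z * t))) μ :=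
  (hm.mul ((Complex.continuous_exp.comp (by fun_prop)).stronglyMeasurable)).aestronglyMeasurable

noncomputable def SOH (μ : Measure ℝ) (h : ℝ → ℂ) (z : ℂ) : ℂ :=
  ∫ t, h t * Complex.exp (-(Complex.I * z * t)) ∂μ

set_option maxHeartbeats 2000000 in
lemma SOH_entire {a b : ℝ} {h : ℝ → ℂ} (hm : StronglyMeasurable h)
    (hint : Integrable h (volume.restrict (Set.Ioo a b))) :
    Differentiable ℂ (SOH (volume.restrict (Set.Ioo a b)) h) := by
  set μ := volume.restrict (Set.Ioo a b)
  intro z₀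
  set M : ℝ := max (|a|) (|b|) with hM
  have hM0 : 0 ≤ M := le_trans (abs_nonneg a) (le_max_left _ _)
  have htM : ∀ t ∈ Set.Ioo a b, |t| ≤ M := by
    intro t ht
    have h1 : -|a| ≤ a := neg_abs_le a
    have h2 : b ≤ |b| := le_abs_self b
    have h3 : |a| ≤ M := le_max_left _ _
    have h4 : |b| ≤ M := le_max_right _ _
    exact abs_le.2 ⟨by linarith [ht.1], by linarith [ht.2]⟩
  have key := hasDerivAt_integral_of_dominated_loc_of_deriv_le
    (F := fun z t => h t * Complex.exp (-(Complex.I * z * t)))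
    (F' := fun z t => h t * ((-(Complex.I * t)) * Complex.exp (-(Complex.I * z * t))))
    (x₀ := z₀) (s := Metric.ball z₀ 1) (μ := volume.restrict (Set.Ioo a b)) (Metric.ball_mem_nhds z₀ one_pos)
    (bound := fun t => ‖h t‖ * (M * Real.exp (M * (‖z₀‖ + 1))))
    ?_ ?_ ?_ ?_ ?_ ?_
  · exact key.2.differentiableAt
  · refine Filter.Eventually.of_forall fun z => ?_
    exact SOH_meas_aux hm z μ
  · -- Integrable (F z₀)
    refine (hint.norm.mul_const (Real.exp (M * ‖z₀‖))).mono'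
      (SOH_meas_aux hm z₀ μ) ?_
    filter_upwards [ae_restrict_mem measurableSet_Ioo] with t ht
    rw [norm_mul, Complex.norm_exp]
    refine mul_le_mul_of_nonneg_left (Real.exp_le_exp.2 ?_) (norm_nonneg _)
    have hre : (-(Complex.I * z₀ * t)).re = z₀.im * t := by
      simp [Complex.mul_re, Complex.mul_im]
      try ring
    rw [hre]
    calc z₀.im * t ≤ |z₀.im * t| := le_abs_self _
      _ = |z₀.im| * |t| := abs_mul _ _
      _ ≤ ‖z₀‖ * M := by
          have := Complex.abs_im_le_norm z₀
          have := htM t ht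
          have := abs_nonneg (z₀.im)
          have h0 : (0:ℝ) ≤ ‖z₀‖ := norm_nonneg _
          exact mul_le_mul ‹|z₀.im| ≤ ‖z₀‖› ‹|t| ≤ M› (abs_nonneg t) h0
      _ = M * ‖z₀‖ := mul_comm _ _
  · exact (hm.mul (((by fun_prop : Continuous fun t : ℝ => (-(Complex.I * t)) *
      Complex.exp (-(Complex.I * z₀ * t)))).stronglyMeasurable)).aestronglyMeasurable
  · -- bound on F'
    filter_upwards [ae_restrict_mem measurableSet_Ioo] with t ht z hz
    have h1 : ‖-(Complex.I * (t : ℂ))‖ = |t| := by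
      simp
    have h2 : (-(Complex.I * z * t)).re = z.im * t := by
      simp [Complex.mul_re, Complex.mul_im]
      try ring
    rw [norm_mul, norm_mul, Complex.norm_exp, h1, h2]
    refine mul_le_mul_of_nonneg_left ?_ (norm_nonneg _)
    have hz' : ‖z‖ ≤ ‖z₀‖ + 1 := by
      have := mem_ball_iff_norm.1 hz
      calc ‖z‖ = ‖z₀ + (z - z₀)‖ := by ring_nf
        _ ≤ ‖z₀‖ + ‖z - z₀‖ := norm_add_le _ _
        _ ≤ ‖z₀‖ + 1 := by linarith
    have hb : z.im * t ≤ M * (‖z₀‖ + 1) := by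
      calc z.im * t ≤ |z.im| * |t| := by
            calc z.im * t ≤ |z.im * t| := le_abs_self _
              _ = |z.im| * |t| := abs_mul _ _
        _ ≤ (‖z₀‖ + 1) * M := mul_le_mul ((Complex.abs_im_le_norm z).trans hz')
              (htM t ht) (abs_nonneg t) (by positivity)
        _ = M * (‖z₀‖ + 1) := mul_comm _ _
    exact mul_le_mul (htM t ht) (Real.exp_le_exp.2 hb) (Real.exp_nonneg _) hM0
  · exact (hint.norm.mul_const _)
  · filter_upwards with t z _
    have : ∀ w : ℂ, -(Complex.I * w * t) = (-(Complex.I * t)) * w := by intro w; ring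
    simp_rw [this]
    have hd := ((hasDerivAt_id z).const_mul (-(Complex.I * (t:ℂ)))).cexp.const_mul (h t)
    convert hd using 1
    · rfl
    · rfl
    · simp only [id_eq]
      ring

lemma SOH_vanish {Ω : ℝ} (hΩ : 0 < Ω) {H : ℂ → ℂ} (hdiff : Differentiable ℂ H)
    (hzero : ∀ᵐ ξ : ℝ ∂(volume.restrict (Set.Icc (-Ω) Ω)), H ξ = 0) :
    ∀ z : ℂ, H z = 0 := by
  have hAN : AnalyticOnNhd ℂ H Set.univ := fun z _ => hdiff.analyticAt z
  have hScont : Continuous fun ξ : ℝ => H ξ := hdiff.continuous.comp Complex.continuous_ofReal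
  have hSmeas : MeasurableSet {ξ : ℝ | H ξ ≠ 0} :=
    (isOpen_compl_singleton.preimage hScont).measurableSet
  have hnull : volume ({ξ : ℝ | H ξ ≠ 0} ∩ Set.Icc (-Ω) Ω) = 0 := by
    have := ae_iff.1 hzero
    rwa [Measure.restrict_apply hSmeas] at this
  have hpt : ∀ n : ℕ, ∃ x : ℝ, x ∈ Set.Ioo 0 (min Ω (1 / (n + 1))) ∧ H x = 0 := by
    intro n
    by_contra hc
    push_neg at hc
    have hsub : Set.Ioo (0:ℝ) (min Ω (1 / (n + 1))) ⊆ {ξ : ℝ | H ξ ≠ 0} ∩ Set.Icc (-Ω) Ω := by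
      intro x hxm
      refine ⟨hc x hxm, ?_, ?_⟩
      · linarith [hxm.1]
      · exact le_of_lt (lt_of_lt_of_le hxm.2 (min_le_left _ _))
    have hpos : (0:ℝ) < min Ω (1 / (n + 1)) := lt_min hΩ (by positivity)
    have := measure_mono_null hsub hnull
    rw [Real.volume_Ioo] at this
    simp only [sub_zero] at this
    rw [ENNReal.ofReal_eq_zero] at this
    linarith
  choose x hx hx0 using hpt
  have hxt : Tendsto x atTop (nhds 0) := by
    have h1 : Tendsto (fun n : ℕ => 1 / ((n:ℝ) + 1)) atTop (nhds 0) :=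
      tendsto_one_div_add_atTop_nhds_zero_nat
    refine tendsto_of_tendsto_of_tendsto_of_le_of_le tendsto_const_nhds h1
      (fun n => (hx n).1.le) (fun n => ((hx n).2.le.trans (min_le_right _ _)))
  have hxt' : Tendsto (fun n => ((x n : ℝ) : ℂ)) atTop (nhdsWithin 0 {(0:ℂ)}ᶜ) := by
    refine tendsto_nhdsWithin_of_tendsto_nhds_of_eventually_within _
      (((Complex.continuous_ofReal.tendsto 0).comp hxt)) ?_
    refine Eventually.of_forall fun n => ?_
    simp only [Set.mem_compl_iff, Set.mem_singleton_iff, Complex.ofReal_eq_zero]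
    exact ne_of_gt (hx n).1
  have hfreq : ∃ᶠ z in nhdsWithin 0 {(0:ℂ)}ᶜ, H z = 0 :=
    hxt'.frequently (Frequently.of_forall fun n => hx0 n)
  intro z
  exact hAN.eqOn_zero_of_preconnected_of_frequently_eq_zero isPreconnected_univ
    (Set.mem_univ 0) hfreq (Set.mem_univ z)

lemma SOH_ae_zero {a b : ℝ} (hab : a < b) {h : ℝ → ℂ} (hm : StronglyMeasurable h)
    (hL2 : MemLp h 2 (volume.restrict (Set.Ioo a b)))
    (hz : ∀ ξ : ℝ, (∫ t in Set.Ioo a b, h t * Complex.exp (-(Complex.I * ξ * t))) = 0) :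
    h =ᵐ[volume.restrict (Set.Ioo a b)] 0 := by
  haveI hT : Fact (0 < b - a) := ⟨by linarith⟩
  set μ := volume.restrict (Set.Ioo a b) with hμ
  have hba : a + (b - a) = b := by ring
  set φ : AddCircle (b - a) → ℂ := AddCircle.liftIoc (b - a) a h with hφ
  have hφm : Measurable φ :=
    (hm.measurable.comp measurable_subtype_coe).comp
      (AddCircle.measurableEquivIoc (b - a) a).measurable
  have hcoe : ∀ x ∈ Set.Ioc a b, φ ↑x = h x := by
    intro x hx
    exact AddCircle.liftIoc_coe_apply (by rwa [hba])
  have hmp : MeasurePreserving (((↑) : ℝ → AddCircle (b - a)))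
      μ (volume : Measure (AddCircle (b - a))) := by
    have := AddCircle.measurePreserving_mk (T := b - a) a
    rw [hba] at this
    rw [hμ, Measure.restrict_congr_set Ioo_ae_eq_Ioc]
    exact this
  have hmap : Measure.map (((↑) : ℝ → AddCircle (b - a))) μ = volume := hmp.map_eq
  have hcomp : (fun x : ℝ => φ x) =ᵐ[μ] h := by
    filter_upwards [ae_restrict_mem measurableSet_Ioo] with x hx
    exact hcoe x (Set.mem_Ioc_of_Ioo hx)
  have hφvol : MemLp φ 2 (volume : Measure (AddCircle (b - a))) := by
    refine ⟨hφm.stronglyMeasurable.aestronglyMeasurable, ?_⟩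
    have h1 : eLpNorm φ 2 (volume : Measure (AddCircle (b - a)))
        = eLpNorm (fun x : ℝ => φ x) 2 μ := by
      rw [← hmap]
      exact eLpNorm_map_measure hφm.stronglyMeasurable.aestronglyMeasurable
        hmp.measurable.aemeasurable
    rw [h1, eLpNorm_congr_ae hcomp]
    exact hL2.2
  -- transfer to the Haar measure of mass 1
  have hc0 : (ENNReal.ofReal (b - a)) ≠ 0 := by
    rw [Ne, ENNReal.ofReal_eq_zero, not_le]
    exact hT.out
  have hct : (ENNReal.ofReal (b - a))⁻¹ ≠ ⊤ := ENNReal.inv_ne_top.2 hc0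
  have hφhaar : MemLp φ 2 (AddCircle.haarAddCircle (T := b - a)) := by
    have h2 := hφvol.smul_measure (c := (ENNReal.ofReal (b - a))⁻¹) hct
    rwa [AddCircle.volume_eq_smul_haarAddCircle, smul_smul,
      ENNReal.inv_mul_cancel hc0 ENNReal.ofReal_ne_top, one_smul] at h2
  -- each Fourier coefficient of φ vanishes
  have hcoeff : ∀ n : ℤ, fourierCoeff φ n = 0 := by
    intro n
    rw [fourierCoeff_eq_intervalIntegral φ n a]
    have hIoc : (∫ x in a..(a + (b - a)), fourier (-n) (x : AddCircle (b - a)) • φ x) = 0 := by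
      rw [intervalIntegral.integral_of_le (by linarith : a ≤ a + (b - a)), hba,
        integral_Ioc_eq_integral_Ioo]
      rw [← hz ((2 * Real.pi * n) / (b - a))]
      refine setIntegral_congr_fun measurableSet_Ioo fun x hx => ?_
      rw [hcoe x (Set.mem_Ioc_of_Ioo hx), fourier_coe_apply, smul_eq_mul, mul_comm]
      congr 1
      push_cast
      have hba' : ((b - a : ℝ) : ℂ) ≠ 0 := by
        rw [Complex.ofReal_ne_zero]
        exact ne_of_gt hT.out
      field_simp
    rw [hIoc, smul_zero]
  -- conclude that φ vanishes a.e.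
  have hrepr : fourierBasis.repr (hφhaar.toLp φ) = 0 := by
    refine lp.ext (funext fun i => ?_)
    rw [fourierBasis_repr]
    have heq : fourierCoeff (⇑(hφhaar.toLp φ)) i = fourierCoeff φ i :=
      integral_congr_ae ((hφhaar.coeFn_toLp).mono fun x hx => by
        simp only []
        rw [hx])
    simp [heq, hcoeff i]
  have hF0 : hφhaar.toLp φ = 0 := by
    have := fourierBasis.repr.map_eq_zero_iff (x := hφhaar.toLp φ)
    exact this.1 hrepr
  have hφ0 : φ =ᵐ[AddCircle.haarAddCircle (T := b - a)] 0 := by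
    refine (hφhaar.coeFn_toLp).symm.trans ?_
    rw [hF0]
    exact Lp.coeFn_zero _ _ _
  have hφvol0 : φ =ᵐ[(volume : Measure (AddCircle (b - a)))] 0 := by
    rw [EventuallyEq] at hφ0 ⊢
    rw [show (volume : Measure (AddCircle (b - a))) =
      (ENNReal.ofReal (b - a)) • AddCircle.haarAddCircle from
        AddCircle.volume_eq_smul_haarAddCircle]
    exact Measure.ae_smul_measure hφ0 _
  have hpull : ∀ᵐ x : ℝ ∂μ, φ (↑x : AddCircle (b - a)) = 0 := by
    have hms : MeasurableSet {y : AddCircle (b - a) | φ y = 0} := hφm (measurableSet_singleton 0)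
    have h5 : ∀ᵐ y ∂(Measure.map (((↑) : ℝ → AddCircle (b - a))) μ), φ y = 0 := by
      rw [hmap]
      exact hφvol0
    exact (ae_map_iff hmp.measurable.aemeasurable hms).mp h5
  filter_upwards [hpull, hcomp] with x hx1 hx2
  rw [← hx2, hx1]
  rfl

lemma SOH_exp_norm (ξ t : ℝ) : ‖Complex.exp (-(Complex.I * ξ * t))‖ = 1 := by
  rw [Complex.norm_exp]
  have : (-(Complex.I * ξ * t)).re = 0 := by
    simp [Complex.mul_re, Complex.mul_im]
  rw [this, Real.exp_zero]

lemma SOH_exp_norm' (ξ t : ℝ) : ‖Complex.exp (Complex.I * ξ * t)‖ = 1 := by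
  rw [Complex.norm_exp]
  have : (Complex.I * ξ * t).re = 0 := by
    simp [Complex.mul_re, Complex.mul_im]
  rw [this, Real.exp_zero]

lemma SOH_conj_c : (starRingEnd ℂ) ((1 / (2 * Real.pi) : ℂ)) = (1 / (2 * Real.pi) : ℂ) := by
  have : ((1 / (2 * Real.pi) : ℝ) : ℂ) = (1 / (2 * Real.pi) : ℂ) := by push_cast; ring
  rw [← this, Complex.conj_ofReal]

lemma SOH_fubini {a b : ℝ} {h : ℝ → ℂ} (hm : StronglyMeasurable h)
    (hInt : Integrable h (volume.restrict (Set.Ioo a b)))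
    {χ : ℝ → ℂ} (hχm : AEStronglyMeasurable χ volume) (hχInt : Integrable χ volume) :
    (∫ t in Set.Ioo a b,
        (starRingEnd ℂ) ((1 / (2 * Real.pi) : ℂ) * ∫ ξ : ℝ, χ ξ * Complex.exp (Complex.I * ξ * t))
          * h t)
      = (1 / (2 * Real.pi) : ℂ) *
          ∫ ξ : ℝ, (starRingEnd ℂ) (χ ξ) * SOH (volume.restrict (Set.Ioo a b)) h ξ := by
  set μ := volume.restrict (Set.Ioo a b) with hμ
  have hpt : ∀ t : ℝ,
      (starRingEnd ℂ) ((1 / (2 * Real.pi) : ℂ) * ∫ ξ : ℝ, χ ξ * Complex.exp (Complex.I * ξ * t))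
        * h t
      = (1 / (2 * Real.pi) : ℂ) *
          ((∫ ξ : ℝ, (starRingEnd ℂ) (χ ξ) * Complex.exp (-(Complex.I * ξ * t))) * h t) := by
    intro t
    rw [map_mul, SOH_conj_c, ← integral_conj, mul_assoc]
    congr 2
    refine integral_congr_ae (Eventually.of_forall fun ξ => ?_)
    show (starRingEnd ℂ) (χ ξ * Complex.exp (Complex.I * ξ * t))
      = (starRingEnd ℂ) (χ ξ) * Complex.exp (-(Complex.I * ξ * t))
    rw [map_mul, ← Complex.exp_conj]
    congr 2
    simp only [map_mul, Complex.conj_I, Complex.conj_ofReal]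
    ring
  simp_rw [hpt]
  rw [integral_const_mul]
  congr 1
  have hswap : (∫ t, (∫ ξ : ℝ, (starRingEnd ℂ) (χ ξ) * Complex.exp (-(Complex.I * ξ * t))) * h t ∂μ)
      = ∫ t, (∫ ξ : ℝ, (starRingEnd ℂ) (χ ξ) * Complex.exp (-(Complex.I * ξ * t)) * h t) ∂μ := by
    refine integral_congr_ae (Eventually.of_forall fun t => ?_)
    show (∫ ξ : ℝ, (starRingEnd ℂ) (χ ξ) * Complex.exp (-(Complex.I * ξ * t))) * h t
      = ∫ ξ : ℝ, (starRingEnd ℂ) (χ ξ) * Complex.exp (-(Complex.I * ξ * t)) * h t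
    rw [← integral_mul_const]
  rw [hswap]
  have hprodInt : Integrable (Function.uncurry fun (t ξ : ℝ) =>
      (starRingEnd ℂ) (χ ξ) * Complex.exp (-(Complex.I * ξ * t)) * h t) (μ.prod volume) := by
    have hbound : Integrable (fun p : ℝ × ℝ => ‖h p.1‖ * ‖χ p.2‖) (μ.prod volume) :=
      hInt.norm.mul_prod hχInt.norm
    refine hbound.mono' ?_ ?_
    · have m1 : AEStronglyMeasurable (fun p : ℝ × ℝ => h p.1) (μ.prod volume) :=
        (hm.comp_measurable measurable_fst).aestronglyMeasurable
      have m2 : AEStronglyMeasurable (fun p : ℝ × ℝ => (starRingEnd ℂ) (χ p.2)) (μ.prod volume) :=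
        continuous_star.comp_aestronglyMeasurable hχm.comp_snd
      have m3 : AEStronglyMeasurable
          (fun p : ℝ × ℝ => Complex.exp (-(Complex.I * p.2 * p.1))) (μ.prod volume) :=
        (Continuous.aestronglyMeasurable (by fun_prop))
      exact (m2.mul m3).mul m1
    · refine Eventually.of_forall fun p => ?_
      simp only [Function.uncurry]
      rw [norm_mul, norm_mul, SOH_exp_norm, RCLike.norm_conj]
      rw [mul_one, mul_comm]
  rw [integral_integral_swap hprodInt]
  refine integral_congr_ae (Eventually.of_forall fun ξ => ?_)
  simp_rw [mul_assoc]
  rw [integral_const_mul]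
  unfold SOH
  congr 1
  refine integral_congr_ae (Eventually.of_forall fun t => ?_)
  ring

lemma band_integrable {Ω : ℝ} {g : ℝ → ℂ} (hg : MemLp g 2 (volume : Measure ℝ))
    (hv : ∀ ξ : ℝ, ξ ∉ Set.Icc (-Ω) Ω → g ξ = 0) : Integrable g volume := by
  have heq : g = Set.indicator (Set.Icc (-Ω) Ω) g := by
    funext ξ
    by_cases hξ : ξ ∈ Set.Icc (-Ω) Ω
    · rw [Set.indicator_of_mem hξ]
    · rw [Set.indicator_of_notMem hξ, hv ξ hξ]
  rw [heq, integrable_indicator_iff measurableSet_Icc]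
  haveI : IsFiniteMeasure (volume.restrict (Set.Icc (-Ω) Ω)) :=
    ⟨by rw [Measure.restrict_apply_univ]; exact measure_Icc_lt_top⟩
  exact (hg.restrict _).integrable one_le_two

lemma band_exp_integrable {Ω : ℝ} {g : ℝ → ℂ} (hg : MemLp g 2 (volume : Measure ℝ))
    (hv : ∀ ξ : ℝ, ξ ∉ Set.Icc (-Ω) Ω → g ξ = 0) (t : ℝ) :
    Integrable (fun ξ : ℝ => g ξ * Complex.exp (Complex.I * ξ * t)) volume := by
  refine ((band_integrable hg hv).norm.mono' ?_ ?_)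
  · exact hg.1.mul (Continuous.aestronglyMeasurable (by fun_prop))
  · refine Eventually.of_forall fun ξ => ?_
    rw [norm_mul, SOH_exp_norm', mul_one]

lemma Bandlimited.zero' {Ω : ℝ} : Bandlimited Ω (0 : ℝ → ℂ) := by
  refine ⟨0, MemLp.zero, fun ξ _ => rfl, fun t => ?_⟩
  simp

lemma Bandlimited.add' {Ω : ℝ} {f₁ f₂ : ℝ → ℂ} (h1 : Bandlimited Ω f₁) (h2 : Bandlimited Ω f₂) :
    Bandlimited Ω (f₁ + f₂) := by
  obtain ⟨g1, hg1, hv1, he1⟩ := h1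
  obtain ⟨g2, hg2, hv2, he2⟩ := h2
  refine ⟨g1 + g2, hg1.add hg2, fun ξ hξ => by simp [hv1 ξ hξ, hv2 ξ hξ], fun t => ?_⟩
  rw [Pi.add_apply, he1 t, he2 t, ← mul_add,
    ← integral_add (band_exp_integrable hg1 hv1 t) (band_exp_integrable hg2 hv2 t)]
  congr 1
  refine integral_congr_ae (Eventually.of_forall fun ξ => ?_)
  show g1 ξ * _ + g2 ξ * _ = (g1 + g2) ξ * _
  rw [Pi.add_apply]
  ring

lemma Bandlimited.smul' {Ω : ℝ} {f : ℝ → ℂ} (c : ℂ) (h : Bandlimited Ω f) :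
    Bandlimited Ω (c • f) := by
  obtain ⟨g, hg, hv, he⟩ := h
  refine ⟨c • g, hg.const_smul c, fun ξ hξ => by simp [hv ξ hξ], fun t => ?_⟩
  rw [Pi.smul_apply, smul_eq_mul, he t]
  have : (∫ ξ : ℝ, (c • g) ξ * Complex.exp (Complex.I * ξ * t))
      = c * ∫ ξ : ℝ, g ξ * Complex.exp (Complex.I * ξ * t) := by
    rw [← integral_const_mul]
    refine integral_congr_ae (Eventually.of_forall fun ξ => ?_)
    show (c • g) ξ * _ = c * (g ξ * _)
    rw [Pi.smul_apply, smul_eq_mul]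
    ring
  rw [this]
  ring

lemma band_continuous {g : ℝ → ℂ} (hgm : AEStronglyMeasurable g volume)
    (hgInt : Integrable g volume) :
    Continuous fun t : ℝ => ∫ ξ : ℝ, g ξ * Complex.exp (Complex.I * ξ * t) := by
  refine continuous_of_dominated (bound := fun ξ => ‖g ξ‖)
    (fun t => hgm.mul (Continuous.aestronglyMeasurable (by fun_prop)))
    (fun t => Eventually.of_forall fun ξ => by rw [norm_mul, SOH_exp_norm', mul_one])
    hgInt.norm
    (Eventually.of_forall fun ξ => by fun_prop)

/-- **Superoscillation density.** For any `Ω > 0` and any bounded interval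
`I = (a, b)`, the restrictions to `I` of `Ω`-bandlimited `L²(ℝ)` functions form
a dense subset of `L²(I)`: every `f ∈ L²(I)` can be approximated in the
`L²(I)`-norm, to arbitrary accuracy, by `Ω`-bandlimited functions. -/
theorem superoscillation_density (Ω a b : ℝ) (hΩ : 0 < Ω) (hab : a < b) :
    ∀ f : ℝ → ℂ, MemLp f 2 (volume.restrict (Set.Ioo a b)) →
      ∀ ε : ℝ, 0 < ε → ∃ g : ℝ → ℂ, Bandlimited Ω g ∧
        eLpNorm (f - g) 2 (volume.restrict (Set.Ioo a b)) < ENNReal.ofReal ε := by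
  intro f hf ε hε
  set μ := volume.restrict (Set.Ioo a b) with hμ
  haveI : IsFiniteMeasure μ :=
    ⟨by rw [Measure.restrict_apply_univ]; exact measure_Ioo_lt_top⟩
  -- the submodule of restrictions of bandlimited functions
  set V : Submodule ℂ (Lp ℂ 2 μ) :=
    { carrier := {x : Lp ℂ 2 μ | ∃ g : ℝ → ℂ, Bandlimited Ω g ∧ ⇑x =ᵐ[μ] g}
      zero_mem' := ⟨0, Bandlimited.zero', Lp.coeFn_zero ℂ 2 μ⟩
      add_mem' := by
        rintro x y ⟨g1, hb1, he1⟩ ⟨g2, hb2, he2⟩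
        exact ⟨g1 + g2, hb1.add' hb2, (Lp.coeFn_add x y).trans (he1.add he2)⟩
      smul_mem' := by
        rintro c x ⟨g, hb, he⟩
        exact ⟨c • g, Bandlimited.smul' c hb, (Lp.coeFn_smul c x).trans (he.const_smul c)⟩ }
    with hV
  have key : V.topologicalClosure = ⊤ := by
    rw [Submodule.topologicalClosure_eq_top_iff, Submodule.eq_bot_iff]
    intro h hmem
    set h' : ℝ → ℂ := ⇑h with hh'
    have hm : StronglyMeasurable h' := Lp.stronglyMeasurable h
    have hL2 : MemLp h' 2 μ := Lp.memLp h
    have hInt : Integrable h' μ := hL2.integrable one_le_two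
    have hdiff : Differentiable ℂ (SOH μ h') := SOH_entire hm hInt
    have hHcont : Continuous (fun ξ : ℝ => SOH μ h' ξ) :=
      hdiff.continuous.comp Complex.continuous_ofReal
    -- orthogonality against every bandlimited restriction
    have horth : ∀ χ : ℝ → ℂ, MemLp χ 2 (volume : Measure ℝ) →
        (∀ ξ : ℝ, ξ ∉ Set.Icc (-Ω) Ω → χ ξ = 0) →
        (∫ ξ : ℝ, (starRingEnd ℂ) (χ ξ) * SOH μ h' ξ) = 0 := by
      intro χ hχ2 hχv
      set fχ : ℝ → ℂ := fun t =>
        (1 / (2 * Real.pi) : ℂ) * ∫ ξ : ℝ, χ ξ * Complex.exp (Complex.I * ξ * t) with hfχ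
      have hχInt : Integrable χ volume := band_integrable hχ2 hχv
      have hfχcont : Continuous fχ :=
        continuous_const.mul (band_continuous hχ2.1 hχInt)
      have hfχ2 : MemLp fχ 2 μ := by
        refine MemLp.of_bound hfχcont.aestronglyMeasurable
          (‖(1 / (2 * Real.pi) : ℂ)‖ * ∫ ξ : ℝ, ‖χ ξ‖) (Eventually.of_forall fun t => ?_)
        rw [hfχ]
        simp only []
        rw [norm_mul]
        refine mul_le_mul_of_nonneg_left ?_ (norm_nonneg _)
        refine (norm_integral_le_integral_norm _).trans (le_of_eq ?_)
        refine integral_congr_ae (Eventually.of_forall fun ξ => ?_)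
        show ‖χ ξ * Complex.exp (Complex.I * ξ * t)‖ = ‖χ ξ‖
        rw [norm_mul, SOH_exp_norm', mul_one]
      have hband : Bandlimited Ω fχ := ⟨χ, hχ2, hχv, fun t => rfl⟩
      have hxV : (hfχ2.toLp fχ) ∈ V := ⟨fχ, hband, hfχ2.coeFn_toLp⟩
      have hip : (inner ℂ (hfχ2.toLp fχ) h : ℂ) = 0 :=
        (Submodule.mem_orthogonal V h).1 hmem _ hxV
      rw [MeasureTheory.L2.inner_def] at hip
      have hip2 : (∫ t, (starRingEnd ℂ) (fχ t) * h' t ∂μ) = 0 := by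
        rw [← hip]
        refine integral_congr_ae ?_
        filter_upwards [hfχ2.coeFn_toLp] with t ht
        rw [RCLike.inner_apply, ht, mul_comm]
      have := SOH_fubini (a := a) (b := b) hm hInt hχ2.1 hχInt
      rw [hμ] at hip2 ⊢
      rw [this] at hip2
      have hc : ((1 / (2 * Real.pi) : ℂ)) ≠ 0 := by
        simp [Real.pi_ne_zero]
      exact (mul_eq_zero.1 hip2).resolve_left hc
    -- apply with the cut-off of SOH itself
    set χ0 : ℝ → ℂ := Set.indicator (Set.Icc (-Ω) Ω) (fun ξ : ℝ => SOH μ h' ξ) with hχ0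
    haveI : IsFiniteMeasure (volume.restrict (Set.Icc (-Ω) Ω)) :=
      ⟨by rw [Measure.restrict_apply_univ]; exact measure_Icc_lt_top⟩
    obtain ⟨C, hC⟩ := (isCompact_Icc (a := -Ω) (b := Ω)).exists_bound_of_continuousOn
      hHcont.continuousOn
    have hχ02 : MemLp χ0 2 (volume : Measure ℝ) := by
      rw [hχ0, memLp_indicator_iff_restrict measurableSet_Icc]
      refine MemLp.of_bound (hHcont.aestronglyMeasurable) C ?_
      filter_upwards [ae_restrict_mem measurableSet_Icc] with ξ hξ
      exact hC ξ hξ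
    have hχ0v : ∀ ξ : ℝ, ξ ∉ Set.Icc (-Ω) Ω → χ0 ξ = 0 := fun ξ hξ =>
      Set.indicator_of_notMem hξ _
    have hzero := horth χ0 hχ02 hχ0v
    -- turn it into the vanishing of ∫ |SOH|² on [-Ω, Ω]
    have hsq : (∫ ξ in Set.Icc (-Ω) Ω, Complex.normSq (SOH μ h' ξ)) = 0 := by
      have h1 : (∫ ξ : ℝ, (starRingEnd ℂ) (χ0 ξ) * SOH μ h' ξ)
          = ∫ ξ : ℝ, Set.indicator (Set.Icc (-Ω) Ω)
              (fun ξ : ℝ => ((Complex.normSq (SOH μ h' ξ) : ℝ) : ℂ)) ξ := by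
        refine integral_congr_ae (Eventually.of_forall fun ξ => ?_)
        show (starRingEnd ℂ) (χ0 ξ) * SOH μ h' ξ = Set.indicator (Set.Icc (-Ω) Ω)
          (fun ξ : ℝ => ((Complex.normSq (SOH μ h' ξ) : ℝ) : ℂ)) ξ
        by_cases hξ : ξ ∈ Set.Icc (-Ω) Ω
        · rw [hχ0, Set.indicator_of_mem hξ, Set.indicator_of_mem hξ,
            Complex.normSq_eq_conj_mul_self]
        · rw [hχ0, Set.indicator_of_notMem hξ, Set.indicator_of_notMem hξ, map_zero, zero_mul]
      rw [h1, integral_indicator measurableSet_Icc] at hzero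
      have hoz : (∫ ξ in Set.Icc (-Ω) Ω, ((Complex.normSq (SOH μ h' ξ) : ℝ) : ℂ))
          = ((∫ ξ in Set.Icc (-Ω) Ω, Complex.normSq (SOH μ h' ξ) : ℝ) : ℂ) := integral_ofReal
      rw [hoz, Complex.ofReal_eq_zero] at hzero
      exact hzero
    have hae : ∀ᵐ ξ : ℝ ∂(volume.restrict (Set.Icc (-Ω) Ω)), SOH μ h' ξ = 0 := by
      have hint : Integrable (fun ξ : ℝ => Complex.normSq (SOH μ h' ξ))
          (volume.restrict (Set.Icc (-Ω) Ω)) :=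
        (Continuous.integrableOn_Icc (by exact Complex.continuous_normSq.comp hHcont))
      have := (integral_eq_zero_iff_of_nonneg_ae
        (Eventually.of_forall fun ξ => Complex.normSq_nonneg _) hint).1 hsq
      filter_upwards [this] with ξ hξ
      exact Complex.normSq_eq_zero.1 hξ
    have hall : ∀ z : ℂ, SOH μ h' z = 0 := SOH_vanish hΩ hdiff hae
    have hae0 : h' =ᵐ[μ] 0 := SOH_ae_zero hab hm hL2 (fun ξ => hall ξ)
    exact (MeasureTheory.Lp.eq_zero_iff_ae_eq_zero).2 hae0
  -- extract an approximant
  have hmem : (hf.toLp f) ∈ closure (V : Set (Lp ℂ 2 μ)) := by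
    have : (hf.toLp f) ∈ V.topologicalClosure := key ▸ Submodule.mem_top
    rwa [← Submodule.topologicalClosure_coe]
  obtain ⟨x, hxV, hdist⟩ := Metric.mem_closure_iff.1 hmem ε hε
  obtain ⟨g, hgB, hxg⟩ := hxV
  refine ⟨g, hgB, ?_⟩
  have h1 : eLpNorm (f - g) 2 μ = eLpNorm (⇑(hf.toLp f - x)) 2 μ := by
    refine eLpNorm_congr_ae ?_
    filter_upwards [Lp.coeFn_sub (hf.toLp f) x, hf.coeFn_toLp, hxg] with t ht1 ht2 ht3
    rw [Pi.sub_apply, ht1, Pi.sub_apply, ht2, ht3]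
  rw [h1]
  have h2 : eLpNorm (⇑(hf.toLp f - x)) 2 μ ≠ ⊤ :=
    Lp.eLpNorm_ne_top _
  rw [ENNReal.lt_ofReal_iff_toReal_lt h2]
  have h3 : (eLpNorm (⇑(hf.toLp f - x)) 2 μ).toReal
      = ‖hf.toLp f - x‖ := (Lp.norm_def _).symm
  rw [h3, ← dist_eq_norm]
  exact hdist
end
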